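/- (Convergence implies aggregation / no false consensus.) Let W, X_1, …, X_n be finitely-valued random variables and let H be a random variable that is a deterministic function of (X_1, …, X_n) (the public history of a Round Robin Protocol after t rounds). Suppose that conditionally on (W, H) the signals X_1, …, X_n are mutually independent (which holds for substitutes in any Round Robin Protocol), and suppose ε-MI consensus holds: I(X_i; W | H) ≤ ε for every i. Then the amount of information not yet aggregated satisfies I((X_1,…,X_n); W) - I(H; W) ≤ n·ε. -/

import Mathlib

open scoped BigOperators

noncomputable section

variable {Ω : Type*} [Fintype Ω]

/-- `μ` is a probability mass function on the finite sample space `Ω`. -/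
def IsPmf (μ : Ω → ℝ) : Prop := (∀ ω, 0 ≤ μ ω) ∧ ∑ ω, μ ω = 1

open Classical in
/-- Probability of the event `A` under the pmf `μ`. -/
def pr (μ : Ω → ℝ) (A : Ω → Prop) : ℝ := ∑ ω, if A ω then μ ω else 0

/-- Conditional probability of `A` given `B` (with the convention `x / 0 = 0`). -/
def cpr (μ : Ω → ℝ) (A B : Ω → Prop) : ℝ := pr μ (fun ω => A ω ∧ B ω) / pr μ B

open Classical in
/-- Mutual information between the random variables `X` and `Y`,
`I(X;Y) = Σ_{x,y} P[X=x,Y=y] log( P[X=x,Y=y] / (P[X=x]·P[Y=y]) )`. -/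
def mi (μ : Ω → ℝ) {S T : Type*} (X : Ω → S) (Y : Ω → T) : ℝ :=
  ∑ x ∈ Finset.univ.image X, ∑ y ∈ Finset.univ.image Y,
    pr μ (fun ω => X ω = x ∧ Y ω = y) *
      Real.log (pr μ (fun ω => X ω = x ∧ Y ω = y) /
        (pr μ (fun ω => X ω = x) * pr μ (fun ω => Y ω = y)))

open Classical in
/-- Mutual information between `X` and `Y` conditioned on the event `B`,
`I(X;Y|B) = Σ_{x,y} P[X=x,Y=y|B] log( P[X=x,Y=y|B] / (P[X=x|B]·P[Y=y|B]) )`. -/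
def miOn (μ : Ω → ℝ) {S T : Type*} (X : Ω → S) (Y : Ω → T) (B : Ω → Prop) : ℝ :=
  ∑ x ∈ Finset.univ.image X, ∑ y ∈ Finset.univ.image Y,
    cpr μ (fun ω => X ω = x ∧ Y ω = y) B *
      Real.log (cpr μ (fun ω => X ω = x ∧ Y ω = y) B /
        (cpr μ (fun ω => X ω = x) B * cpr μ (fun ω => Y ω = y) B))

open Classical in
/-- Conditional mutual information `I(X;Y|Z) = E_Z[ I(X;Y|Z=z) ]`. -/
def cmi (μ : Ω → ℝ) {S T U : Type*} (X : Ω → S) (Y : Ω → T) (Z : Ω → U) : ℝ :=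
  ∑ z ∈ Finset.univ.image Z,
    pr μ (fun ω => Z ω = z) * miOn μ X Y (fun ω => Z ω = z)

/-- The family `X i` is mutually independent conditioned on the event `B`. -/
def iIndepOn {n : ℕ} (μ : Ω → ℝ) {S : Type*} (X : Fin n → Ω → S) (B : Ω → Prop) : Prop :=
  ∀ x : Fin n → S,
    cpr μ (fun ω => ∀ i, X i ω = x i) B = ∏ i, cpr μ (fun ω => X i ω = x i) B

/-- The family `X i` is mutually independent conditioned on `W`
(the "substitutes" information structure when `W` is the event to be predicted). -/
def iCondIndep {n : ℕ} (μ : Ω → ℝ) {S T : Type*} (X : Fin n → Ω → S) (W : Ω → T) : Prop :=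
  ∀ w : T, pr μ (fun ω => W ω = w) ≠ 0 → iIndepOn μ X (fun ω => W ω = w)


/-! Since `H` is a function of `X = (X 1, …, X n)`, the chain rule gives
`I(X;W) - I(H;W) = I(X;W|H)`. Conditional independence given `(W, H)` turns
`∑ i, I(X i;W|H) - I(X;W|H)` into the conditional total correlation
`E[log (P(X|H) / ∏ i, P(X i|H))]`, which is nonnegative by Gibbs' inequality because
`∑ x, ∏ i, P(X i = x i|H = h) ≤ 1`. Every information quantity is handled as the
`μ`-expectation of a pointwise log-ratio. -/

open Finset Real

section Basic
variable {S T U : Type*} {μ : Ω → ℝ}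

open Classical in
def restrictTo (μ : Ω → ℝ) (B : Ω → Prop) : Ω → ℝ := fun ω => if B ω then μ ω else 0

lemma pr_restrictTo (A B : Ω → Prop) : pr (restrictTo μ B) A = pr μ (fun ω => A ω ∧ B ω) := by
  unfold pr restrictTo
  exact sum_congr rfl fun ω _ => by by_cases hA : A ω <;> by_cases hB : B ω <;> simp [hA, hB]

lemma pr_congr {A B : Ω → Prop} (h : ∀ ω, A ω ↔ B ω) : pr μ A = pr μ B :=
  congrArg _ (funext fun ω => propext (h ω))

lemma pr_nonneg (hμ : ∀ ω, 0 ≤ μ ω) (A : Ω → Prop) : 0 ≤ pr μ A :=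
  sum_nonneg fun ω _ => by split_ifs <;> simp [hμ ω]

lemma pr_mono (hμ : ∀ ω, 0 ≤ μ ω) {A B : Ω → Prop} (h : ∀ ω, A ω → B ω) :
    pr μ A ≤ pr μ B :=
  sum_le_sum fun ω _ => by split_ifs with hA hB <;> simp_all

lemma pr_pos (hμ : ∀ ω, 0 ≤ μ ω) {A : Ω → Prop} {ω : Ω} (hω : 0 < μ ω) (hA : A ω) :
    0 < pr μ A :=
  hω.trans_le <| by
    classical
    unfold pr
    simpa [hA] using single_le_sum (f := fun ω' => if A ω' then μ ω' else 0)
      (fun ω' _ => by split_ifs <;> simp [hμ ω']) (mem_univ ω)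

lemma cpr_nonneg (hμ : ∀ ω, 0 ≤ μ ω) (A B : Ω → Prop) : 0 ≤ cpr μ A B :=
  div_nonneg (pr_nonneg hμ _) (pr_nonneg hμ _)

lemma cpr_pos (hμ : ∀ ω, 0 ≤ μ ω) {A B : Ω → Prop} {ω : Ω} (hω : 0 < μ ω) (hA : A ω)
    (hB : B ω) : 0 < cpr μ A B :=
  div_pos (pr_pos hμ hω ⟨hA, hB⟩) (pr_pos hμ hω hB)

lemma pr_mul_cpr (hμ : ∀ ω, 0 ≤ μ ω) (A B : Ω → Prop) :
    pr μ B * cpr μ A B = pr μ (fun ω => A ω ∧ B ω) := by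
  rcases eq_or_ne (pr μ B) 0 with hB | hB
  · rw [hB, zero_mul]
    exact (le_antisymm (hB ▸ pr_mono hμ fun ω h => h.2) (pr_nonneg hμ _)).symm
  · exact mul_div_cancel₀ _ hB

lemma cpr_and_div_cpr (A B C : Ω → Prop) (hC : pr μ C ≠ 0) :
    cpr μ (fun ω => A ω ∧ B ω) C / cpr μ B C = cpr μ A (fun ω => B ω ∧ C ω) := by
  unfold cpr
  rw [div_div_div_cancel_right₀ hC]
  exact congrArg (· / _) (pr_congr fun ω => and_assoc)

lemma sum_image_pr_mul [DecidableEq U] (μ : Ω → ℝ) (Z : Ω → U) (g : U → ℝ) :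
    ∑ z ∈ univ.image Z, pr μ (fun ω => Z ω = z) * g z = ∑ ω, μ ω * g (Z ω) := by
  simp only [pr, sum_mul, ite_mul, zero_mul]
  rw [sum_comm]
  exact sum_congr rfl fun ω _ => by
    rw [sum_ite_eq, if_pos (mem_image_of_mem Z (mem_univ ω))]

lemma sum_image_sum_image_pr_mul [DecidableEq S] [DecidableEq T] (μ : Ω → ℝ) (X : Ω → S)
    (Y : Ω → T) (g : S → T → ℝ) :
    ∑ x ∈ univ.image X, ∑ y ∈ univ.image Y, pr μ (fun ω => X ω = x ∧ Y ω = y) * g x y =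
      ∑ ω, μ ω * g (X ω) (Y ω) := by
  simp only [pr, sum_mul, ite_mul, zero_mul, ite_and]
  simp_rw [sum_comm (s := univ.image Y), sum_comm (s := univ.image X) (t := univ)]
  exact sum_congr rfl fun ω _ => by
    simp only [sum_ite_irrel, sum_const_zero]
    rw [sum_ite_eq, if_pos (mem_image_of_mem X (mem_univ ω)), sum_ite_eq,
      if_pos (mem_image_of_mem Y (mem_univ ω))]

end Basic

section Pointwise
variable {S T U : Type*} {μ : Ω → ℝ}

def pmi (μ : Ω → ℝ) (X : Ω → S) (Y : Ω → T) (ω : Ω) : ℝ :=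
  log (pr μ (fun ω' => X ω' = X ω ∧ Y ω' = Y ω) /
    (pr μ (fun ω' => X ω' = X ω) * pr μ (fun ω' => Y ω' = Y ω)))

def pmiOn (μ : Ω → ℝ) (X : Ω → S) (Y : Ω → T) (B : Ω → Prop) (ω : Ω) : ℝ :=
  log (cpr μ (fun ω' => X ω' = X ω ∧ Y ω' = Y ω) B /
    (cpr μ (fun ω' => X ω' = X ω) B * cpr μ (fun ω' => Y ω' = Y ω) B))

def cpmi (μ : Ω → ℝ) (X : Ω → S) (Y : Ω → T) (Z : Ω → U) (ω : Ω) : ℝ :=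
  pmiOn μ X Y (fun ω' => Z ω' = Z ω) ω

lemma mi_eq_sum_pmi (μ : Ω → ℝ) (X : Ω → S) (Y : Ω → T) :
    mi μ X Y = ∑ ω, μ ω * pmi μ X Y ω := by
  classical
  exact sum_image_sum_image_pr_mul μ X Y fun x y =>
    log (pr μ (fun ω' => X ω' = x ∧ Y ω' = y) /
      (pr μ (fun ω' => X ω' = x) * pr μ (fun ω' => Y ω' = y)))

lemma pr_mul_miOn (hμ : ∀ ω, 0 ≤ μ ω) (X : Ω → S) (Y : Ω → T) (B : Ω → Prop) :
    pr μ B * miOn μ X Y B = ∑ ω, restrictTo μ B ω * pmiOn μ X Y B ω := by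
  simp_rw [miOn, mul_sum, ← mul_assoc, pr_mul_cpr hμ, ← pr_restrictTo (μ := μ) _ B]
  classical
  rw [sum_image_sum_image_pr_mul]
  rfl

lemma cmi_eq_sum_cpmi (hμ : ∀ ω, 0 ≤ μ ω) (X : Ω → S) (Y : Ω → T) (Z : Ω → U) :
    cmi μ X Y Z = ∑ ω, μ ω * cpmi μ X Y Z ω := by
  classical
  simp_rw [cmi, pr_mul_miOn hμ, restrictTo, ite_mul, zero_mul]
  rw [sum_comm]
  exact sum_congr rfl fun ω _ => by
    rw [sum_ite_eq, if_pos (mem_image_of_mem Z (mem_univ ω)), cpmi]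

end Pointwise

section ChainRule
variable {T U V : Type*} {μ : Ω → ℝ}

lemma pmi_sub_pmi_eq_cpmi_of_eq_comp (hμ : ∀ ω, 0 ≤ μ ω) {Y : Ω → V} {H : Ω → U}
    {f : V → U} (hf : ∀ ω, H ω = f (Y ω)) (W : Ω → T) {ω : Ω} (hω : 0 < μ ω) :
    pmi μ Y W ω - pmi μ H W ω = cpmi μ Y W H ω := by
  have hYH : ∀ ω', Y ω' = Y ω → H ω' = H ω := fun ω' h => by rw [hf, hf ω, h]
  have hYWH : pr μ (fun ω' => (Y ω' = Y ω ∧ W ω' = W ω) ∧ H ω' = H ω) =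
      pr μ (fun ω' => Y ω' = Y ω ∧ W ω' = W ω) :=
    pr_congr fun ω' => and_iff_left_of_imp fun h => hYH ω' h.1
  have hYH' : pr μ (fun ω' => Y ω' = Y ω ∧ H ω' = H ω) = pr μ (fun ω' => Y ω' = Y ω) :=
    pr_congr fun ω' => and_iff_left_of_imp (hYH ω')
  have hWH : pr μ (fun ω' => W ω' = W ω ∧ H ω' = H ω) =
      pr μ (fun ω' => H ω' = H ω ∧ W ω' = W ω) :=
    pr_congr fun ω' => and_comm
  have hYW := pr_pos hμ hω (A := fun ω' => Y ω' = Y ω ∧ W ω' = W ω) ⟨rfl, rfl⟩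
  have hY := pr_pos hμ hω (A := fun ω' => Y ω' = Y ω) rfl
  have hW := pr_pos hμ hω (A := fun ω' => W ω' = W ω) rfl
  have hHW := pr_pos hμ hω (A := fun ω' => H ω' = H ω ∧ W ω' = W ω) ⟨rfl, rfl⟩
  have hH := pr_pos hμ hω (A := fun ω' => H ω' = H ω) rfl
  simp only [pmi, cpmi, pmiOn, cpr, hYWH, hYH', hWH]
  rw [← log_div (by positivity) (by positivity)]
  congr 1
  field_simp

lemma mi_sub_mi_eq_cmi_of_eq_comp (hμ : ∀ ω, 0 ≤ μ ω) {Y : Ω → V} {H : Ω → U}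
    {f : V → U} (hf : ∀ ω, H ω = f (Y ω)) (W : Ω → T) :
    mi μ Y W - mi μ H W = cmi μ Y W H := by
  rw [mi_eq_sum_pmi, mi_eq_sum_pmi, cmi_eq_sum_cpmi hμ, ← sum_sub_distrib]
  refine sum_congr rfl fun ω _ => ?_
  rcases (hμ ω).eq_or_lt with hω | hω
  · simp [← hω]
  · rw [← mul_sub, pmi_sub_pmi_eq_cpmi_of_eq_comp hμ hf W hω]

end ChainRule

section TotalCorrelation
variable {ι S U V : Type*} [Fintype ι] {μ : Ω → ℝ}

lemma sum_image_pr [DecidableEq V] (μ : Ω → ℝ) (Z : Ω → V) :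
    ∑ z ∈ univ.image Z, pr μ (fun ω => Z ω = z) = ∑ ω, μ ω := by
  simpa using sum_image_pr_mul μ Z 1

lemma sum_image_cpr_le_one [DecidableEq V] (Z : Ω → V) (B : Ω → Prop) :
    ∑ z ∈ univ.image Z, cpr μ (fun ω => Z ω = z) B ≤ 1 := by
  simp only [cpr, ← sum_div, ← pr_restrictTo (μ := μ) _ B]
  rw [sum_image_pr]
  exact div_self_le_one _

lemma sum_image_prod_cpr_le_one [DecidableEq ι] [DecidableEq S] (hμ : ∀ ω, 0 ≤ μ ω)
    (X : ι → Ω → S) (B : Ω → Prop) :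
    ∑ x ∈ univ.image (fun ω i => X i ω), ∏ i, cpr μ (fun ω => X i ω = x i) B ≤ 1 :=
  calc _ ≤ ∑ x ∈ Fintype.piFinset fun i => univ.image (X i),
        ∏ i, cpr μ (fun ω => X i ω = x i) B := by
        refine sum_le_sum_of_subset_of_nonneg ?_ fun x _ _ =>
          prod_nonneg fun i _ => cpr_nonneg hμ _ _
        rintro _ hx
        obtain ⟨ω, -, rfl⟩ := mem_image.1 hx
        exact Fintype.mem_piFinset.2 fun i => mem_image_of_mem (X i) (mem_univ ω)
    _ = ∏ i, ∑ v ∈ univ.image (X i), cpr μ (fun ω => X i ω = v) B := by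
        rw [prod_univ_sum]
    _ ≤ 1 := prod_le_one (fun i _ => sum_nonneg fun v _ => cpr_nonneg hμ _ _)
        fun i _ => sum_image_cpr_le_one (X i) B

lemma pr_and_mul_div_cpr_le (hμ : ∀ ω, 0 ≤ μ ω) (A B : Ω → Prop) {p : ℝ} (hp : 0 ≤ p) :
    pr μ (fun ω => A ω ∧ B ω) * (p / cpr μ A B) ≤ pr μ B * p := by
  rcases (pr_nonneg hμ (fun ω => A ω ∧ B ω)).eq_or_lt with hAB | hAB
  · rw [← hAB, zero_mul]
    exact mul_nonneg (pr_nonneg hμ B) hp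
  · have hB : 0 < pr μ B := hAB.trans_le (pr_mono hμ fun ω h => h.2)
    refine le_of_eq ?_
    unfold cpr
    field_simp

lemma sum_mul_log_nonneg_of_sum_mul_inv_le_one (hμ : IsPmf μ) {r : Ω → ℝ}
    (hr : ∀ ω, 0 < μ ω → 0 < r ω) (h : ∑ ω, μ ω * (r ω)⁻¹ ≤ 1) :
    0 ≤ ∑ ω, μ ω * log (r ω) := by
  have hpt : ∀ ω, μ ω * (1 - (r ω)⁻¹) ≤ μ ω * log (r ω) := fun ω => by
    rcases (hμ.1 ω).eq_or_lt with hω | hω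
    · simp [← hω]
    · exact mul_le_mul_of_nonneg_left (one_sub_inv_le_log_of_pos (hr ω hω)) hω.le
  calc 0 ≤ ∑ ω, μ ω * (1 - (r ω)⁻¹) := by
        rw [sum_congr rfl fun ω _ => mul_one_sub (μ ω) _, sum_sub_distrib, hμ.2]
        linarith
    _ ≤ _ := sum_le_sum fun ω _ => hpt ω

lemma condTotalCorrelation_nonneg (hμ : IsPmf μ) (X : ι → Ω → S) (H : Ω → U) :
    0 ≤ ∑ ω, μ ω * log (cpr μ (fun ω' => (fun i => X i ω') = fun i => X i ω)
      (fun ω' => H ω' = H ω) / ∏ i, cpr μ (fun ω' => X i ω' = X i ω) (fun ω' => H ω' = H ω)) := by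
  classical
  refine sum_mul_log_nonneg_of_sum_mul_inv_le_one hμ (fun ω hω =>
    div_pos (cpr_pos hμ.1 hω rfl rfl) (prod_pos fun i _ => cpr_pos hμ.1 hω rfl rfl)) ?_
  simp_rw [inv_div]
  rw [← sum_image_sum_image_pr_mul μ (fun ω i => X i ω) H fun x h =>
    (∏ i, cpr μ (fun ω' => X i ω' = x i) (fun ω' => H ω' = h)) /
      cpr μ (fun ω' => (fun i => X i ω') = x) (fun ω' => H ω' = h)]
  calc _ ≤ ∑ x ∈ univ.image (fun ω i => X i ω), ∑ h ∈ univ.image H,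
        pr μ (fun ω => H ω = h) * ∏ i, cpr μ (fun ω' => X i ω' = x i) (fun ω' => H ω' = h) :=
        sum_le_sum fun x _ => sum_le_sum fun h _ => pr_and_mul_div_cpr_le hμ.1 _ _
          (prod_nonneg fun i _ => cpr_nonneg hμ.1 _ _)
    _ = ∑ h ∈ univ.image H, pr μ (fun ω => H ω = h) * ∑ x ∈ univ.image (fun ω i => X i ω),
        ∏ i, cpr μ (fun ω' => X i ω' = x i) (fun ω' => H ω' = h) := by
        rw [sum_comm]
        simp_rw [mul_sum]
    _ ≤ ∑ h ∈ univ.image H, pr μ (fun ω => H ω = h) * 1 :=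
        sum_le_sum fun h _ => mul_le_mul_of_nonneg_left
          (sum_image_prod_cpr_le_one hμ.1 X _) (pr_nonneg hμ.1 _)
    _ = 1 := by simp_rw [mul_one]; rw [sum_image_pr, hμ.2]

end TotalCorrelation

lemma sum_log_div_mul_sub_log_div_mul {ι : Type*} (s : Finset ι) {j q c : ℝ} {J Q : ι → ℝ}
    (hj : 0 < j) (hq : 0 < q) (hc : 0 < c) (hJ : ∀ i ∈ s, 0 < J i) (hQ : ∀ i ∈ s, 0 < Q i)
    (h : j / c = ∏ i ∈ s, J i / c) :
    ∑ i ∈ s, log (J i / (Q i * c)) - log (j / (q * c)) = log (q / ∏ i ∈ s, Q i) := by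
  have hsplit : ∀ a b, 0 < a → 0 < b → log (a / (b * c)) = log (a / c) - log b :=
    fun a b ha hb => by rw [mul_comm, ← div_div, log_div (by positivity) hb.ne']
  rw [sum_congr rfl fun i hi => hsplit _ _ (hJ i hi) (hQ i hi), hsplit j q hj hq,
    sum_sub_distrib, ← log_prod fun i hi => (div_pos (hJ i hi) hc).ne', ← h,
    log_div hq.ne' (prod_pos hQ).ne', log_prod fun i hi => (hQ i hi).ne']
  ring

section Subadditivity
variable {n : ℕ} {S T U : Type*} {μ : Ω → ℝ}

lemma sum_cpmi_sub_cpmi_of_iCondIndep (hμ : ∀ ω, 0 ≤ μ ω) (X : Fin n → Ω → S) (W : Ω → T)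
    (H : Ω → U) (hind : iCondIndep μ X fun ω => (W ω, H ω)) {ω : Ω} (hω : 0 < μ ω) :
    ∑ i, cpmi μ (X i) W H ω - cpmi μ (fun ω i => X i ω) W H ω =
      log (cpr μ (fun ω' => (fun i => X i ω') = fun i => X i ω) (fun ω' => H ω' = H ω) /
        ∏ i, cpr μ (fun ω' => X i ω' = X i ω) (fun ω' => H ω' = H ω)) := by
  have hH : pr μ (fun ω' => H ω' = H ω) ≠ 0 := ne_of_gt (pr_pos hμ hω rfl)
  have hfac := hind (W ω, H ω) (ne_of_gt (pr_pos hμ hω rfl)) fun i => X i ω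
  simp only [Prod.mk.injEq] at hfac
  refine sum_log_div_mul_sub_log_div_mul univ (cpr_pos hμ hω ⟨rfl, rfl⟩ rfl)
    (cpr_pos hμ hω rfl rfl) (cpr_pos hμ hω rfl rfl) (fun i _ => cpr_pos hμ hω ⟨rfl, rfl⟩ rfl)
    (fun i _ => cpr_pos hμ hω rfl rfl) ?_
  simp only [cpr_and_div_cpr _ _ _ hH, funext_iff]
  exact hfac

lemma cmi_le_sum_cmi_of_iCondIndep (hμ : IsPmf μ) (X : Fin n → Ω → S) (W : Ω → T)
    (H : Ω → U) (hind : iCondIndep μ X fun ω => (W ω, H ω)) :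
    cmi μ (fun ω i => X i ω) W H ≤ ∑ i, cmi μ (X i) W H := by
  rw [← sub_nonneg]
  simp_rw [cmi_eq_sum_cpmi hμ.1]
  rw [sum_comm, ← sum_sub_distrib]
  refine (condTotalCorrelation_nonneg hμ X H).trans_eq (sum_congr rfl fun ω _ => ?_)
  rcases (hμ.1 ω).eq_or_lt with hω | hω
  · simp [← hω]
  · rw [← mul_sum, ← mul_sub, sum_cpmi_sub_cpmi_of_iCondIndep hμ.1 X W H hind hω]

end Subadditivity

/-- Convergence implies aggregation (no false consensus): if `H` is a deterministic
function of the signals `X 1, …, X n`, the signals are mutually independent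
conditioned on `(W, H)` (which holds for substitutes in any Round Robin Protocol),
and ε-MI consensus holds, i.e. `I(X i; W | H) ≤ ε` for every `i`, then the amount of
information not yet aggregated satisfies `I((X 1,…,X n); W) - I(H; W) ≤ n·ε`. -/
theorem no_false_consensus_of_substitutes
    {n : ℕ} {S T U : Type*} (μ : Ω → ℝ) (hμ : IsPmf μ)
    (W : Ω → T) (X : Fin n → Ω → S) (H : Ω → U)
    (hH : ∃ f : (Fin n → S) → U, ∀ ω, H ω = f (fun i => X i ω))
    (hind : iCondIndep μ X (fun ω => (W ω, H ω)))
    (ε : ℝ) (hcons : ∀ i, cmi μ (X i) W H ≤ ε) :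
    mi μ (fun ω => fun i => X i ω) W - mi μ H W ≤ n * ε := by
  obtain ⟨f, hf⟩ := hH
  calc mi μ (fun ω i => X i ω) W - mi μ H W = cmi μ (fun ω i => X i ω) W H :=
        mi_sub_mi_eq_cmi_of_eq_comp hμ.1 hf W
    _ ≤ ∑ i, cmi μ (X i) W H := cmi_le_sum_cmi_of_iCondIndep hμ X W H hind
    _ ≤ ∑ _i : Fin n, ε := sum_le_sum fun i _ => hcons i
    _ = n * ε := by simp
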